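/- arXiv:2604.20367 — 10 statements merged into one kernel-verified Lean document; each statement's English description precedes it below -/
import Mathlib

section
/- For every positive integer n and all real numbers s and τ, the polynomial identity n·s^{n+2} − (n+2)·τ²·s^n + 2·τ^{n+2} = (τ−s)²·( Σ_{k=1}^{n} 2k·s^{k−1}·τ^{n−k+1} + n·s^n ) holds. -/
open Finset

section

variable {R : Type*} [CommRing R]

theorem sum_Icc_succ_weighted_pow (n : ℕ) (s τ : R) :
    ∑ k ∈ Icc 1 (n + 1), 2 * (k : R) * s ^ (k - 1) * τ ^ (n + 1 - k + 1) =
      τ * ∑ k ∈ Icc 1 n, 2 * (k : R) * s ^ (k - 1) * τ ^ (n - k + 1) +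
        2 * ((n + 1 : ℕ) : R) * s ^ n * τ := by
  rw [sum_Icc_succ_top (Nat.le_add_left 1 n), mul_sum, Nat.add_sub_cancel, Nat.sub_self,
    pow_one]
  congr 1
  refine sum_congr rfl fun k hk => ?_
  rw [show n + 1 - k + 1 = n - k + 1 + 1 by grind, pow_succ]
  ring

theorem mul_pow_add_two_sub_add_eq_sq_mul (n : ℕ) (s τ : R) :
    (n : R) * s ^ (n + 2) - ((n : R) + 2) * τ ^ 2 * s ^ n + 2 * τ ^ (n + 2) =
      (τ - s) ^ 2 *
        ((∑ k ∈ Icc 1 n, 2 * (k : R) * s ^ (k - 1) * τ ^ (n - k + 1)) + (n : R) * s ^ n) := by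
  induction n with
  | zero => simp
  | succ n ih =>
    rw [sum_Icc_succ_weighted_pow]
    push_cast
    linear_combination τ * ih

end

theorem stmt1_general (n : ℕ) (s τ : ℝ) :
    (n : ℝ) * s ^ (n + 2) - ((n : ℝ) + 2) * τ ^ 2 * s ^ n + 2 * τ ^ (n + 2) =
      (τ - s) ^ 2 *
        ((∑ k ∈ Finset.Icc 1 n, 2 * (k : ℝ) * s ^ (k - 1) * τ ^ (n - k + 1))
          + (n : ℝ) * s ^ n) :=
  mul_pow_add_two_sub_add_eq_sq_mul n s τ

theorem stmt1 (n : ℕ) (hn : 0 < n) (s τ : ℝ) :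
    (n : ℝ) * s ^ (n + 2) - ((n : ℝ) + 2) * τ ^ 2 * s ^ n + 2 * τ ^ (n + 2) =
      (τ - s) ^ 2 *
        ((∑ k ∈ Finset.Icc 1 n, 2 * (k : ℝ) * s ^ (k - 1) * τ ^ (n - k + 1))
          + (n : ℝ) * s ^ n) :=
  stmt1_general n s τ
end

section
/- For every positive integer n, every real number a ≥ 0, and every real number τ, one has ∫_a^{a+1} (τ−s)²·( Σ_{k=1}^{n} 2k·s^{k−1}·τ^{n−k+1} + n·s^n ) ds = 2·τ^{n+2} + (n/(n+3))·S_{n+3} − ((n+2)/(n+1))·τ²·S_{n+1}, where S_j = (a+1)^j − a^j. -/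
/-! Since `(1 - x)² ∑_{k=1}^n k x^{k-1} = 1 - (n+1) xⁿ + n x^{n+1}`, the integrand collapses to the
polynomial `2 τ^{n+2} + n s^{n+2} - (n+2) τ² sⁿ`, which is integrated term by term. -/

open Finset

theorem sq_sub_mul_sum_mul_pow {R : Type*} [CommRing R] (n : ℕ) (x y : R) :
    (y - x) ^ 2 * ∑ k ∈ Icc 1 n, (k : R) * x ^ (k - 1) * y ^ (n - k) =
      y ^ (n + 1) - (n + 1) * y * x ^ n + n * x ^ (n + 1) := by
  induction n with
  | zero => simp
  | succ n ih =>
    have hshift : ∑ k ∈ Icc 1 n, (k : R) * x ^ (k - 1) * y ^ (n + 1 - k) =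
        y * ∑ k ∈ Icc 1 n, (k : R) * x ^ (k - 1) * y ^ (n - k) := by
      rw [mul_sum]
      refine sum_congr rfl fun k hk => ?_
      rw [show n + 1 - k = n - k + 1 by have := (mem_Icc.mp hk).2; omega, pow_succ]
      ring
    rw [sum_Icc_succ_top (by omega), hshift, Nat.sub_self, Nat.add_sub_cancel]
    push_cast
    linear_combination y * ih

theorem sq_sub_mul_two_mul_sum_add_mul_pow {R : Type*} [CommRing R] (n : ℕ) (s τ : R) :
    (τ - s) ^ 2 * ((∑ k ∈ Icc 1 n, 2 * (k : R) * s ^ (k - 1) * τ ^ (n - k + 1)) + n * s ^ n) =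
      2 * τ ^ (n + 2) + n * s ^ (n + 2) - (n + 2) * τ ^ 2 * s ^ n := by
  have hsum : ∑ k ∈ Icc 1 n, 2 * (k : R) * s ^ (k - 1) * τ ^ (n - k + 1) =
      2 * τ * ∑ k ∈ Icc 1 n, (k : R) * s ^ (k - 1) * τ ^ (n - k) := by
    rw [mul_sum]
    exact sum_congr rfl fun k _ => by ring
  rw [hsum]
  linear_combination 2 * τ * sq_sub_mul_sum_mul_pow n s τ

theorem stmt2_general (n : ℕ) (a : ℝ) (τ : ℝ) :
    ∫ s in a..(a + 1), (τ - s) ^ 2 *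
        ((∑ k ∈ Finset.Icc 1 n, 2 * (k : ℝ) * s ^ (k - 1) * τ ^ (n - k + 1))
          + (n : ℝ) * s ^ n) =
      2 * τ ^ (n + 2)
        + ((n : ℝ) / ((n : ℝ) + 3)) * ((a + 1) ^ (n + 3) - a ^ (n + 3))
        - (((n : ℝ) + 2) / ((n : ℝ) + 1)) * τ ^ 2 * ((a + 1) ^ (n + 1) - a ^ (n + 1)) := by
  simp only [sq_sub_mul_two_mul_sum_add_mul_pow]
  have hint {f : ℝ → ℝ} (hf : Continuous f) : IntervalIntegrable f MeasureTheory.volume a (a + 1) :=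
    hf.intervalIntegrable _ _
  rw [intervalIntegral.integral_sub (hint (by fun_prop)) (hint (by fun_prop)),
    intervalIntegral.integral_add (hint (by fun_prop)) (hint (by fun_prop)),
    intervalIntegral.integral_const, intervalIntegral.integral_const_mul,
    intervalIntegral.integral_const_mul, integral_pow, integral_pow]
  field_simp
  push_cast
  ring

theorem stmt2 (n : ℕ) (hn : 0 < n) (a : ℝ) (ha : 0 ≤ a) (τ : ℝ) :
    ∫ s in a..(a + 1), (τ - s) ^ 2 *
        ((∑ k ∈ Finset.Icc 1 n, 2 * (k : ℝ) * s ^ (k - 1) * τ ^ (n - k + 1))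
          + (n : ℝ) * s ^ n) =
      2 * τ ^ (n + 2)
        + ((n : ℝ) / ((n : ℝ) + 3)) * ((a + 1) ^ (n + 3) - a ^ (n + 3))
        - (((n : ℝ) + 2) / ((n : ℝ) + 1)) * τ ^ 2 * ((a + 1) ^ (n + 1) - a ^ (n + 1)) :=
  stmt2_general n a τ
end

section
/- Let n be a positive integer and let q : [0,∞) → [0,1] be a measurable function with ∫_0^∞ q(s) ds = 1 and ∫_0^∞ s^n q(s) ds < ∞. If a ≥ 0 is a real number such that ∫_0^∞ s^n q(s) ds = ∫_a^{a+1} s^n ds, then ∫_0^∞ s^{n+2} q(s) ds ≥ ∫_a^{a+1} s^{n+2} ds. -/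
/-!
Choose `c, d` so that `f s = s ^ (n + 2) - c * s ^ n - d` vanishes at `a` and `b = a + 1`.
Since `f' s = s ^ (n - 1) * ((n + 2) * s ^ 2 - n * c)`, `f` decreases and then increases on
`[0, ∞)`, so `f ≤ 0` on `[a, b]` and `f ≥ 0` elsewhere. As `0 ≤ q ≤ 1`, this gives
`f * q ≥ f * 1_[a, b]` pointwise, and after integrating, the constraints `∫ q = b - a` and
`∫ s ^ n * q = ∫_a^b s ^ n` cancel the `c` and `d` terms.
-/

open MeasureTheory Set

theorem hasDerivAt_pow_add_two_sub_mul_pow {n : ℕ} (hn : 0 < n) (c d x : ℝ) :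
    HasDerivAt (fun s : ℝ => s ^ (n + 2) - c * s ^ n - d)
      (x ^ (n - 1) * ((n + 2) * x ^ 2 - c * n)) x := by
  obtain ⟨m, rfl⟩ : ∃ m, n = m + 1 := ⟨n - 1, by omega⟩
  have h : HasDerivAt (fun s : ℝ => s ^ (m + 3) - c * s ^ (m + 1) - d) _ x :=
    ((hasDerivAt_pow (m + 3) x).sub ((hasDerivAt_pow (m + 1) x).const_mul c)).sub_const d
  exact h.congr_deriv (by push_cast; ring)

section PowAddTwoSub

variable {n : ℕ} (c d : ℝ)

theorem strictAntiOn_pow_add_two_sub_mul_pow (hn : 0 < n) :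
    StrictAntiOn (fun s : ℝ => s ^ (n + 2) - c * s ^ n - d) (Icc 0 √(c * n / (n + 2))) := by
  refine strictAntiOn_of_deriv_neg (convex_Icc _ _) (by fun_prop) fun x hx => ?_
  rw [interior_Icc] at hx
  rw [(hasDerivAt_pow_add_two_sub_mul_pow hn c d x).deriv]
  have hx2 : x ^ 2 < c * n / (n + 2) := (Real.lt_sqrt hx.1.le).mp hx.2
  rw [lt_div_iff₀ (by positivity)] at hx2
  exact mul_neg_of_pos_of_neg (pow_pos hx.1 _) (by linarith)

theorem strictMonoOn_pow_add_two_sub_mul_pow (hn : 0 < n) :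
    StrictMonoOn (fun s : ℝ => s ^ (n + 2) - c * s ^ n - d) (Ici √(c * n / (n + 2))) := by
  refine strictMonoOn_of_deriv_pos (convex_Ici _) (by fun_prop) fun x hx => ?_
  rw [interior_Ici] at hx
  have hx0 : 0 < x := (Real.sqrt_nonneg _).trans_lt hx
  rw [(hasDerivAt_pow_add_two_sub_mul_pow hn c d x).deriv]
  have hx2 : c * n / (n + 2) < x ^ 2 := (Real.sqrt_lt' hx0).mp hx
  rw [div_lt_iff₀ (by positivity)] at hx2
  exact mul_pos (pow_pos hx0 _) (by linarith)

end PowAddTwoSub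

theorem nonpos_on_Icc_and_nonneg_off_Ioo_of_strictAntiOn_of_strictMonoOn {f : ℝ → ℝ}
    {t a b : ℝ} (hanti : StrictAntiOn f (Icc 0 t)) (hmono : StrictMonoOn f (Ici t))
    (ha : 0 ≤ a) (hab : a < b) (hfa : f a = 0) (hfb : f b = 0) :
    (∀ s ∈ Icc a b, f s ≤ 0) ∧ ∀ s ∈ Ici 0 \ Ioo a b, 0 ≤ f s := by
  have hat : a ≤ t := by
    by_contra! h
    simpa [hfa, hfb] using hmono h.le (h.trans hab).le hab
  have htb : t ≤ b := by
    by_contra! h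
    simpa [hfa, hfb] using hanti ⟨ha, hat⟩ ⟨ha.trans hab.le, h.le⟩ hab
  constructor
  · rintro s ⟨has, hsb⟩
    rcases le_total s t with hst | hts
    · simpa [hfa] using hanti.antitoneOn ⟨ha, hat⟩ ⟨ha.trans has, hst⟩ has
    · simpa [hfb] using hmono.monotoneOn hts htb hsb
  · rintro s ⟨hs, hs_out⟩
    rcases le_or_gt s a with hsa | has
    · simpa [hfa] using hanti.antitoneOn ⟨hs, hsa.trans hat⟩ ⟨ha, hat⟩ hsa
    · have hbs : b ≤ s := not_lt.mp fun hsb => hs_out ⟨has, hsb⟩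
      simpa [hfb] using hmono.monotoneOn htb (htb.trans hbs) hbs

theorem exists_pow_add_two_sub_mul_pow_sub_nonpos_on_Icc {n : ℕ} (hn : 0 < n) {a b : ℝ}
    (ha : 0 ≤ a) (hab : a < b) :
    ∃ c d : ℝ, (∀ s ∈ Icc a b, s ^ (n + 2) - c * s ^ n - d ≤ 0) ∧
      ∀ s ∈ Ici 0 \ Ioo a b, 0 ≤ s ^ (n + 2) - c * s ^ n - d := by
  set c := (b ^ (n + 2) - a ^ (n + 2)) / (b ^ n - a ^ n)
  have hden : b ^ n - a ^ n ≠ 0 := (sub_pos.mpr (pow_lt_pow_left₀ hab ha hn.ne')).ne'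
  refine ⟨c, a ^ (n + 2) - c * a ^ n,
    nonpos_on_Icc_and_nonneg_off_Ioo_of_strictAntiOn_of_strictMonoOn
      (strictAntiOn_pow_add_two_sub_mul_pow c _ hn) (strictMonoOn_pow_add_two_sub_mul_pow c _ hn)
      ha hab (by ring) ?_⟩
  simp only [c]
  field_simp
  ring

section Integrals

variable {α : Type*} [MeasurableSpace α] {μ : Measure α}

theorem setIntegral_le_setIntegral_mul_of_nonpos_of_nonneg {E S : Set α} {f q : α → ℝ}
    (hE : MeasurableSet E) (hS : MeasurableSet S) (hES : E ⊆ S)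
    (hf : IntegrableOn f E μ) (hfq : IntegrableOn (fun x => f x * q x) S μ)
    (h_in : ∀ x ∈ E, f x ≤ 0 ∧ q x ≤ 1) (h_out : ∀ x ∈ S \ E, 0 ≤ f x ∧ 0 ≤ q x) :
    ∫ x in E, f x ∂μ ≤ ∫ x in S, f x * q x ∂μ := by
  rw [← inter_eq_right.mpr hES, ← setIntegral_indicator hE]
  refine setIntegral_mono_on (hf.integrable_indicator hE).integrableOn hfq hS fun x hxS => ?_
  by_cases hxE : x ∈ E
  · obtain ⟨hf0, hq1⟩ := h_in x hxE
    rw [indicator_of_mem hxE]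
    nlinarith
  · obtain ⟨hf0, hq0⟩ := h_out x ⟨hxS, hxE⟩
    rw [indicator_of_notMem hxE]
    exact mul_nonneg hf0 hq0

theorem integrable_and_integral_eq_of_lintegral_ofReal_eq {g : α → ℝ}
    (hg : AEStronglyMeasurable g μ) (hg0 : 0 ≤ᵐ[μ] g) {r : ℝ} (hr : 0 ≤ r)
    (h : ∫⁻ x, ENNReal.ofReal (g x) ∂μ = ENNReal.ofReal r) :
    Integrable g μ ∧ ∫ x, g x ∂μ = r :=
  ⟨⟨hg, (hasFiniteIntegral_iff_ofReal hg0).mpr (h ▸ ENNReal.ofReal_lt_top)⟩,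
    by rw [integral_eq_lintegral_of_nonneg_ae hg0 hg, h, ENNReal.toReal_ofReal hr]⟩

theorem ofReal_le_lintegral_ofReal_of_le_integral {g : α → ℝ}
    (hg : AEStronglyMeasurable g μ) (hg0 : 0 ≤ᵐ[μ] g) {r : ℝ}
    (h : Integrable g μ → r ≤ ∫ x, g x ∂μ) :
    ENNReal.ofReal r ≤ ∫⁻ x, ENNReal.ofReal (g x) ∂μ := by
  rcases eq_top_or_lt_top (∫⁻ x, ENNReal.ofReal (g x) ∂μ) with htop | hfin
  · exact htop ▸ le_top
  have hint : Integrable g μ := ⟨hg, (hasFiniteIntegral_iff_ofReal hg0).mpr hfin⟩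
  rw [← ofReal_integral_eq_lintegral_ofReal hint hg0]
  exact ENNReal.ofReal_le_ofReal (h hint)

end Integrals

theorem intervalIntegral_pow_add_two_le_setIntegral_pow_add_two_mul {n : ℕ} (hn : 0 < n)
    {q : ℝ → ℝ} {a b : ℝ} (ha : 0 ≤ a) (hab : a < b) (hq : ∀ s ∈ Ioi 0, q s ∈ Icc 0 1)
    (hq_int : IntegrableOn q (Ioi 0)) (hqn_int : IntegrableOn (fun s => s ^ n * q s) (Ioi 0))
    (hqn2_int : IntegrableOn (fun s => s ^ (n + 2) * q s) (Ioi 0))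
    (hmass : ∫ s in Ioi 0, q s = b - a)
    (hmom : ∫ s in Ioi 0, s ^ n * q s = ∫ s in a..b, s ^ n) :
    ∫ s in a..b, s ^ (n + 2) ≤ ∫ s in Ioi 0, s ^ (n + 2) * q s := by
  obtain ⟨c, d, h_in, h_out⟩ := exists_pow_add_two_sub_mul_pow_sub_nonpos_on_Icc hn ha hab
  have hfq : (fun s => (s ^ (n + 2) - c * s ^ n - d) * q s)
      = fun s => s ^ (n + 2) * q s - c * (s ^ n * q s) - d * q s := by
    funext s; ring
  have hdiff_int : IntegrableOn (fun s => s ^ (n + 2) * q s - c * (s ^ n * q s)) (Ioi 0) :=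
    hqn2_int.sub (hqn_int.const_mul c)
  have key := setIntegral_le_setIntegral_mul_of_nonpos_of_nonneg (μ := volume)
    (f := fun s => s ^ (n + 2) - c * s ^ n - d) (q := q) measurableSet_Ioc measurableSet_Ioi
    (fun s hs => ha.trans_lt hs.1) (by fun_prop : Continuous _).integrableOn_Ioc
    (by rw [hfq]; exact hdiff_int.sub (hq_int.const_mul d))
    (fun s hs => ⟨h_in s (Ioc_subset_Icc_self hs), (hq s (ha.trans_lt hs.1)).2⟩)
    (fun s hs => ⟨h_out s ⟨mem_Ici.mpr (le_of_lt hs.1), fun h => hs.2 (Ioo_subset_Ioc_self h)⟩, (hq s hs.1).1⟩)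
  have hlhs : ∫ s in Ioc a b, s ^ (n + 2) - c * s ^ n - d
      = (∫ s in a..b, s ^ (n + 2)) - c * (∫ s in a..b, s ^ n) - d * (b - a) := by
    rw [← intervalIntegral.integral_of_le hab.le, intervalIntegral.integral_sub,
      intervalIntegral.integral_sub, intervalIntegral.integral_const_mul,
      intervalIntegral.integral_const, smul_eq_mul, mul_comm d]
    all_goals exact (by fun_prop : Continuous _).intervalIntegrable _ _
  have hrhs : ∫ s in Ioi 0, (s ^ (n + 2) - c * s ^ n - d) * q s
      = (∫ s in Ioi 0, s ^ (n + 2) * q s) - c * (∫ s in Ioi 0, s ^ n * q s)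
        - d * ∫ s in Ioi 0, q s := by
    rw [hfq, integral_sub hdiff_int (hq_int.const_mul d),
      integral_sub hqn2_int (hqn_int.const_mul c), integral_const_mul, integral_const_mul]
  rw [hlhs, hrhs, hmom, hmass] at key
  linarith

theorem stmt4_general (n : ℕ) (hn : 0 < n) (q : ℝ → ℝ) (hq_meas : Measurable q)
    (hq01 : ∀ s, 0 ≤ s → 0 ≤ q s ∧ q s ≤ 1)
    (hq_total : ∫⁻ s in Set.Ioi (0:ℝ), ENNReal.ofReal (q s) = 1)
    (a : ℝ) (ha : 0 ≤ a)
    (haq : ∫⁻ s in Set.Ioi (0:ℝ), ENNReal.ofReal (s ^ n * q s)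
        = ENNReal.ofReal (∫ s in a..(a + 1), s ^ n)) :
    ∫⁻ s in Set.Ioi (0:ℝ), ENNReal.ofReal (s ^ (n + 2) * q s)
      ≥ ENNReal.ofReal (∫ s in a..(a + 1), s ^ (n + 2)) := by
  have hq : ∀ s ∈ Ioi (0:ℝ), q s ∈ Icc 0 1 := fun s hs => hq01 s hs.le
  have hq_nonneg : 0 ≤ᵐ[volume.restrict (Ioi 0)] q :=
    ae_restrict_of_forall_mem measurableSet_Ioi fun s hs => (hq s hs).1
  have hmoment_nonneg (k : ℕ) : 0 ≤ᵐ[volume.restrict (Ioi 0)] fun s : ℝ => s ^ k * q s :=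
    ae_restrict_of_forall_mem measurableSet_Ioi fun s hs => mul_nonneg (pow_nonneg hs.le k) (hq s hs).1
  obtain ⟨hq_int, hmass⟩ := integrable_and_integral_eq_of_lintegral_ofReal_eq
    hq_meas.aestronglyMeasurable hq_nonneg zero_le_one (hq_total.trans ENNReal.ofReal_one.symm)
  obtain ⟨hqn_int, hmom⟩ := integrable_and_integral_eq_of_lintegral_ofReal_eq
    (by fun_prop) (hmoment_nonneg n) (intervalIntegral.integral_nonneg (by linarith)
      fun s hs => pow_nonneg (ha.trans hs.1) n) haq
  exact ofReal_le_lintegral_ofReal_of_le_integral (by fun_prop) (hmoment_nonneg (n + 2))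
    fun hqn2_int => intervalIntegral_pow_add_two_le_setIntegral_pow_add_two_mul hn ha
      (lt_add_one a) hq hq_int hqn_int hqn2_int (by rw [hmass, add_sub_cancel_left]) hmom

theorem stmt4 (n : ℕ) (hn : 0 < n) (q : ℝ → ℝ) (hq_meas : Measurable q)
    (hq01 : ∀ s, 0 ≤ s → 0 ≤ q s ∧ q s ≤ 1)
    (hq_total : ∫⁻ s in Set.Ioi (0:ℝ), ENNReal.ofReal (q s) = 1)
    (hfin : ∫⁻ s in Set.Ioi (0:ℝ), ENNReal.ofReal (s ^ n * q s) < ⊤)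
    (a : ℝ) (ha : 0 ≤ a)
    (haq : ∫⁻ s in Set.Ioi (0:ℝ), ENNReal.ofReal (s ^ n * q s)
        = ENNReal.ofReal (∫ s in a..(a + 1), s ^ n)) :
    ∫⁻ s in Set.Ioi (0:ℝ), ENNReal.ofReal (s ^ (n + 2) * q s)
      ≥ ENNReal.ofReal (∫ s in a..(a + 1), s ^ (n + 2)) :=
  stmt4_general n hn q hq_meas hq01 hq_total a ha haq
end

section
/- Let n be a positive integer and let q : [0,∞) → [0,1] be a measurable function with ∫_0^∞ q(s) ds = 1 and ∫_0^∞ s^n q(s) ds < ∞. Then there exists a real number a ≥ 0 such that ∫_a^{a+1} s^n ds = ∫_0^∞ s^n q(s) ds, i.e. ((a+1)^{n+1} − a^{n+1})/(n+1) = ∫_0^∞ s^n q(s) ds. -/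
/-!
Bathtub principle: among densities `0 ≤ q ≤ 1` of total mass one on `(0, ∞)`, the indicator of
`(0, 1]` minimises `∫ g q` for every nondecreasing `g`. Hence `∫ sⁿ q(s) ds ≥ ∫₀¹ sⁿ ds = 1/(n+1)`,
which is the value of `a ↦ ∫ₐ^{a+1} sⁿ ds` at `a = 0`; since this function is continuous and
unbounded for `n ≥ 1`, the intermediate value theorem produces `a`.
-/

open MeasureTheory Set

theorem setIntegral_Ioc_zero_one_le_setIntegral_mul {g q : ℝ → ℝ} (hg : MonotoneOn g (Ici 0))
    (hq : ∀ s ∈ Ioi (0 : ℝ), 0 ≤ q s ∧ q s ≤ 1) (hq_int : IntegrableOn q (Ioi 0))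
    (hq_total : ∫ s in Ioi 0, q s = 1) (hgq : IntegrableOn (fun s ↦ g s * q s) (Ioi 0)) :
    ∫ s in Ioc 0 1, g s ≤ ∫ s in Ioi 0, g s * q s := by
  have hg_int : IntegrableOn g (Ioc 0 1) :=
    (hg.mono Icc_subset_Ici_self |>.integrableOn_isCompact isCompact_Icc).mono_set
      Ioc_subset_Icc_self
  have hg_sub : IntegrableOn (fun s ↦ g s - g 1) (Ioc 0 1) :=
    hg_int.sub (integrableOn_const (by simp))
  have hind_int : IntegrableOn ((Ioc 0 1).indicator fun s ↦ g s - g 1) (Ioi 0) :=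
    (integrableOn_indicator_iff measurableSet_Ioc).2 (hg_sub.mono_set inter_subset_left)
  -- `(g s - g 1) * (q s - 1_(0,1] s) ≥ 0`, as both factors change sign at `s = 1`.
  have hpointwise : ∀ s ∈ Ioi (0 : ℝ),
      g 1 * q s + (Ioc 0 1).indicator (fun s ↦ g s - g 1) s ≤ g s * q s := by
    intro s hs
    obtain ⟨hq0, hq1⟩ := hq s hs
    by_cases hs1 : s ≤ 1
    · have : g s ≤ g 1 := hg (mem_Ici.2 hs.le) (mem_Ici.2 zero_le_one) hs1
      rw [indicator_of_mem (show s ∈ Ioc 0 1 from ⟨hs, hs1⟩)]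
      nlinarith
    · have : g 1 ≤ g s := hg (mem_Ici.2 zero_le_one) (mem_Ici.2 hs.le) (le_of_not_ge hs1)
      rw [indicator_of_notMem fun h ↦ hs1 h.2]
      nlinarith
  have hlower : ∫ s in Ioi 0, g 1 * q s + (Ioc 0 1).indicator (fun s ↦ g s - g 1) s
      = ∫ s in Ioc 0 1, g s := by
    rw [integral_add (hq_int.const_mul _) hind_int, integral_const_mul, hq_total,
      setIntegral_indicator measurableSet_Ioc, inter_eq_right.mpr Ioc_subset_Ioi_self,
      integral_sub hg_int (integrableOn_const (by simp))]
    simp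
  exact hlower ▸ setIntegral_mono_on ((hq_int.const_mul _).add hind_int) hgq measurableSet_Ioi
    hpointwise

theorem setIntegral_Ioc_zero_one_pow (n : ℕ) :
    ∫ s in Ioc (0 : ℝ) 1, s ^ n = 1 / ((n : ℝ) + 1) := by
  rw [← intervalIntegral.integral_of_le zero_le_one, integral_pow]
  simp

theorem add_one_le_add_one_pow_succ_sub_pow {a : ℝ} (ha : 0 ≤ a) {n : ℕ} (hn : n ≠ 0) :
    a + 1 ≤ (a + 1) ^ (n + 1) - a ^ (n + 1) :=
  calc a + 1 ≤ (a + 1) ^ n := le_self_pow₀ (by linarith) hn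
    _ = (a + 1) ^ (n + 1) - a * (a + 1) ^ n := by ring
    _ ≤ (a + 1) ^ (n + 1) - a ^ (n + 1) := by
      rw [pow_succ' a]
      gcongr
      linarith

theorem exists_nonneg_add_one_pow_succ_sub_pow_div_eq {n : ℕ} (hn : 0 < n) {V : ℝ}
    (hV : 1 / ((n : ℝ) + 1) ≤ V) :
    ∃ a : ℝ, 0 ≤ a ∧ ((a + 1) ^ (n + 1) - a ^ (n + 1)) / ((n : ℝ) + 1) = V := by
  set f : ℝ → ℝ := fun a ↦ ((a + 1) ^ (n + 1) - a ^ (n + 1)) / ((n : ℝ) + 1)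
  have hn1 : (0 : ℝ) < n + 1 := by positivity
  set M := ((n : ℝ) + 1) * V
  have hM : 0 ≤ M := mul_nonneg hn1.le ((by positivity : (0 : ℝ) ≤ 1 / (n + 1)).trans hV)
  have hf0 : f 0 ≤ V := by simpa [f] using hV
  have hfM : V ≤ f M := by
    rw [le_div_iff₀ hn1]
    linarith [add_one_le_add_one_pow_succ_sub_pow hM hn.ne']
  obtain ⟨a, ha, hfa⟩ := intermediate_value_Icc hM (by fun_prop) ⟨hf0, hfM⟩
  exact ⟨a, ha.1, hfa⟩

theorem stmt5_general (n : ℕ) (hn : 0 < n) (q : ℝ → ℝ)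
    (hq01 : ∀ s, 0 ≤ s → 0 ≤ q s ∧ q s ≤ 1)
    (hq_int : IntegrableOn q (Set.Ioi 0))
    (hq_total : ∫ s in Set.Ioi (0:ℝ), q s = 1)
    (hsn_int : IntegrableOn (fun s => s ^ n * q s) (Set.Ioi 0)) :
    ∃ a : ℝ, 0 ≤ a ∧
      ((a + 1) ^ (n + 1) - a ^ (n + 1)) / ((n : ℝ) + 1)
        = ∫ s in Set.Ioi (0:ℝ), s ^ n * q s := by
  have hmoment : 1 / ((n : ℝ) + 1) ≤ ∫ s in Ioi 0, s ^ n * q s := by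
    rw [← setIntegral_Ioc_zero_one_pow]
    exact setIntegral_Ioc_zero_one_le_setIntegral_mul pow_left_monotoneOn
      (fun s hs ↦ hq01 s (le_of_lt hs)) hq_int hq_total hsn_int
  exact exists_nonneg_add_one_pow_succ_sub_pow_div_eq hn hmoment

theorem stmt5 (n : ℕ) (hn : 0 < n) (q : ℝ → ℝ) (hq_meas : Measurable q)
    (hq01 : ∀ s, 0 ≤ s → 0 ≤ q s ∧ q s ≤ 1)
    (hq_int : IntegrableOn q (Set.Ioi 0))
    (hq_total : ∫ s in Set.Ioi (0:ℝ), q s = 1)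
    (hsn_int : IntegrableOn (fun s => s ^ n * q s) (Set.Ioi 0)) :
    ∃ a : ℝ, 0 ≤ a ∧
      ((a + 1) ^ (n + 1) - a ^ (n + 1)) / ((n : ℝ) + 1)
        = ∫ s in Set.Ioi (0:ℝ), s ^ n * q s :=
  stmt5_general n hn q hq01 hq_int hq_total hsn_int
end

section
/- Let a ≥ 0 be a real number and let τ be a real number with 0 < τ < a + 1. Then ∫_a^{a+1} s (s−τ)² ds > (τ/5) · ∫_a^{a+1} (s−τ)² ds; that is, the weighted average of s over [a, a+1] with weight (s−τ)² is strictly greater than τ/5. -/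
/-!
Substituting `t = s - τ`, both integrals become integrals of powers of `t` over
`[a - τ, a + 1 - τ]`, so the claim is a polynomial inequality in `a` and `u = a + 1 - τ`.
Multiplied by `60`, the difference of the two sides is
`12 u³ + (2/3)(3u - 1)² + 1/3 + 12 a (2u - 1)² + 4 a`, which is positive for `u > 0`, `a ≥ 0`.
-/

theorem integral_sub_pow (a b τ : ℝ) (n : ℕ) :
    ∫ s in a..b, (s - τ) ^ n = ((b - τ) ^ (n + 1) - (a - τ) ^ (n + 1)) / (n + 1) := by
  rw [intervalIntegral.integral_comp_sub_right (· ^ n), integral_pow]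

theorem integral_mul_sub_sq (a b τ : ℝ) :
    ∫ s in a..b, s * (s - τ) ^ 2 =
      ((b - τ) ^ 4 - (a - τ) ^ 4) / 4 + τ * (((b - τ) ^ 3 - (a - τ) ^ 3) / 3) := by
  have h : ∀ s : ℝ, s * (s - τ) ^ 2 = (s - τ) ^ 3 + τ * (s - τ) ^ 2 := fun s => by ring
  simp_rw [h]
  rw [intervalIntegral.integral_add, intervalIntegral.integral_const_mul, integral_sub_pow,
    integral_sub_pow]
  · norm_num
  all_goals exact Continuous.intervalIntegrable (by fun_prop) _ _

theorem stmt9_general (a : ℝ) (ha : 0 ≤ a) (τ : ℝ) (hτa : τ < a + 1) :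
    (∫ s in a..(a + 1), s * (s - τ) ^ 2) >
      (τ / 5) * ∫ s in a..(a + 1), (s - τ) ^ 2 := by
  rw [integral_mul_sub_sq, integral_sub_pow]
  set u := a + 1 - τ with hu_def
  have hu : 0 < u := sub_pos.2 hτa
  have hτ : τ = a + 1 - u := by rw [hu_def]; ring
  have hv : a - τ = u - 1 := by rw [hτ]; ring
  have key : 60 * ((u ^ 4 - (u - 1) ^ 4) / 4 + τ * ((u ^ 3 - (u - 1) ^ 3) / 3)
        - τ / 5 * ((u ^ (2 + 1) - (u - 1) ^ (2 + 1)) / (2 + 1))) =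
      12 * u ^ 3 + 2 / 3 * (3 * u - 1) ^ 2 + 1 / 3 + 12 * a * (2 * u - 1) ^ 2 + 4 * a := by
    rw [hτ]; ring
  have : 0 < 12 * u ^ 3 + 2 / 3 * (3 * u - 1) ^ 2 + 1 / 3 + 12 * a * (2 * u - 1) ^ 2 + 4 * a := by
    positivity
  rw [hv]
  push_cast
  linarith

theorem stmt9 (a : ℝ) (ha : 0 ≤ a) (τ : ℝ) (hτ : 0 < τ) (hτa : τ < a + 1) :
    (∫ s in a..(a + 1), s * (s - τ) ^ 2) >
      (τ / 5) * ∫ s in a..(a + 1), (s - τ) ^ 2 :=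
  stmt9_general a ha τ hτa
end

section
/- Let n ≥ 2 be an integer, a ≥ 0 a real number, and τ a real number with 0 < τ < a + 1. Then ∫_a^{a+1} (s−τ)² · ( 2τ^n + 4τ^{n−1} s + n s^n ) ds ≥ (1/12) · ( 14/5 + n·5^{−n} ) · τ^n. -/
/-!
Expanding, `(s - τ)² (2τ + 4s) = 4s³ - 6τs² + 2τ³`, so dropping the nonnegative term `n sⁿ` and
factoring out `τⁿ⁻¹` leaves the explicit cubic `(a+1)⁴ - a⁴ - 2τ((a+1)³ - a³) + 2τ³` in `τ`, which
is at least `6τ/25` for `a ≥ 0`. On the other side `n 5⁻ⁿ ≤ 2/25` for `n ≥ 2`, and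
`(14/5 + 2/25) / 12 = 6/25`.
-/

theorem natCast_mul_one_div_five_pow_le {n : ℕ} (hn : 2 ≤ n) :
    (n : ℝ) * (1 / 5 : ℝ) ^ n ≤ 2 / 25 := by
  have hnat : n * 25 ≤ 2 * 5 ^ n := by
    induction n, hn using Nat.le_induction with
    | base => norm_num
    | succ k hk ih =>
      have : 25 ≤ 5 ^ k := by simpa using Nat.pow_le_pow_right (by norm_num : 0 < 5) hk
      rw [pow_succ]
      omega
  have hcast : (n : ℝ) * 25 ≤ 2 * 5 ^ n := by exact_mod_cast hnat
  rw [one_div_pow, mul_one_div, div_le_iff₀ (by positivity)]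
  linarith

theorem integral_sq_sub_mul_eq (a b τ : ℝ) :
    ∫ s in a..b, (s - τ) ^ 2 * (2 * τ + 4 * s) =
      (b ^ 4 - a ^ 4) - 2 * τ * (b ^ 3 - a ^ 3) + 2 * τ ^ 3 * (b - a) := by
  have hderiv : ∀ s ∈ Set.uIcc a b,
      HasDerivAt (fun x : ℝ => x ^ 4 - 2 * τ * x ^ 3 + 2 * τ ^ 3 * x)
        ((s - τ) ^ 2 * (2 * τ + 4 * s)) s := by
    intro s _
    have h : HasDerivAt (fun x : ℝ => x ^ 4 - 2 * τ * x ^ 3 + 2 * τ ^ 3 * x) _ s :=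
      ((hasDerivAt_pow 4 s).sub ((hasDerivAt_pow 3 s).const_mul (2 * τ))).add
        ((hasDerivAt_id s).const_mul (2 * τ ^ 3))
    convert h using 1
    push_cast
    ring
  rw [intervalIntegral.integral_eq_sub_of_hasDerivAt hderiv
    (Continuous.intervalIntegrable (by fun_prop) _ _)]
  ring

theorem six_div_twentyfive_mul_le_integral_sq_sub_mul {a τ : ℝ} (ha : 0 ≤ a) (hτ : 0 ≤ τ) :
    6 / 25 * τ ≤ ∫ s in a..(a + 1), (s - τ) ^ 2 * (2 * τ + 4 * s) := by
  rw [integral_sq_sub_mul_eq]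
  nlinarith [sq_nonneg (τ - a - 1 / 2), sq_nonneg (τ - 3 / 5), mul_nonneg ha hτ,
    sq_nonneg (a - τ + 1), mul_nonneg (mul_nonneg ha ha) hτ,
    mul_nonneg ha (sq_nonneg (τ - 1)), sq_nonneg (5 * τ - 3), mul_nonneg ha (sq_nonneg (a - τ))]

theorem stmt10_general (n : ℕ) (hn : 2 ≤ n) (a : ℝ) (ha : 0 ≤ a) (τ : ℝ)
    (hτ : 0 < τ) :
    (∫ s in a..(a + 1), (s - τ) ^ 2 * (2 * τ ^ n + 4 * τ ^ (n - 1) * s + (n : ℝ) * s ^ n))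
      ≥ (1 / 12) * (14 / 5 + (n : ℝ) * (1 / 5 : ℝ) ^ n) * τ ^ n := by
  have hτn : τ ^ n = τ ^ (n - 1) * τ := by rw [← pow_succ, Nat.sub_add_cancel (by omega)]
  have hdrop : τ ^ (n - 1) * ∫ s in a..(a + 1), (s - τ) ^ 2 * (2 * τ + 4 * s) ≤
      ∫ s in a..(a + 1), (s - τ) ^ 2 * (2 * τ ^ n + 4 * τ ^ (n - 1) * s + (n : ℝ) * s ^ n) := by
    rw [← intervalIntegral.integral_const_mul]
    refine intervalIntegral.integral_mono_on (by linarith)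
      (Continuous.intervalIntegrable (by fun_prop) _ _)
      (Continuous.intervalIntegrable (by fun_prop) _ _) fun s hs => ?_
    have hs : 0 ≤ s := ha.trans hs.1
    have : 0 ≤ (s - τ) ^ 2 * ((n : ℝ) * s ^ n) := by positivity
    rw [hτn]
    linarith
  calc (1 / 12) * (14 / 5 + (n : ℝ) * (1 / 5 : ℝ) ^ n) * τ ^ n ≤ 6 / 25 * τ ^ n := by
        gcongr
        linarith [natCast_mul_one_div_five_pow_le hn]
    _ = τ ^ (n - 1) * (6 / 25 * τ) := by rw [hτn]; ring
    _ ≤ τ ^ (n - 1) * ∫ s in a..(a + 1), (s - τ) ^ 2 * (2 * τ + 4 * s) := by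
        gcongr
        exact six_div_twentyfive_mul_le_integral_sq_sub_mul ha hτ.le
    _ ≤ _ := hdrop

theorem stmt10 (n : ℕ) (hn : 2 ≤ n) (a : ℝ) (ha : 0 ≤ a) (τ : ℝ)
    (hτ : 0 < τ) (hτa : τ < a + 1) :
    (∫ s in a..(a + 1), (s - τ) ^ 2 * (2 * τ ^ n + 4 * τ ^ (n - 1) * s + (n : ℝ) * s ^ n))
      ≥ (1 / 12) * (14 / 5 + (n : ℝ) * (1 / 5 : ℝ) ^ n) * τ ^ n :=
  stmt10_general n hn a ha τ hτ
end

section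
/- Let n ≥ 2 and l ≥ 2 be integers and let ψ : [0,∞) → [0,∞) be an absolutely continuous decreasing function with ψ(0) = 1 and −1 ≤ ψ'(s) ≤ 0 for almost every s. Suppose A = ∫_0^∞ s^{n−1} ψ(s) ds and B = ∫_0^∞ s^{2l+n−1} ψ(s) ds are both finite, and let a ≥ 0 be a real number satisfying ((a+1)^{n+1} − a^{n+1})/(n+1) = n·A. Then B ≥ (1/n)·(nA)^{(2l+n)/n} + S_{n+2l+1}/((2l+n)(n+2l+1)) − (nA)^{2l/n}·S_{n+1}/(n(n+1)). -/
/-!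
Melas's comparison argument.  Let `Φ = melasProfile a`, which is `1` on `[0, a]` and falls
linearly to `0` on `[a, a + 1]`; the condition on `a` says exactly that `∫ s^(n-1) Φ = A`.
Since `ψ' ≥ -1`, `ψ + id` is nondecreasing, so `ψ - Φ` changes sign only once, from `≤ 0` to
`≥ 0`, at some `c`.  Hence `(s^(2l) - c^(2l)) (ψ - Φ) ≥ 0`, and integrating against `s^(n-1)`
with equal `A`-moments gives `B ≥ ∫ s^(2l+n-1) Φ = S_{n+2l+1} / ((2l+n)(n+2l+1))`.  The other
two terms of the bound cancel because `S_{n+1} = (n+1) n A`.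
-/

open MeasureTheory Set

noncomputable def melasProfile (a s : ℝ) : ℝ := min 1 (max 0 (a + 1 - s))

section melasProfile

variable {a s : ℝ}

theorem melasProfile_of_le (h : s ≤ a) : melasProfile a s = 1 := by
  rw [melasProfile, max_eq_right (by linarith), min_eq_left (by linarith)]

theorem melasProfile_of_mem_Icc (h : s ∈ Icc a (a + 1)) : melasProfile a s = a + 1 - s := by
  rw [melasProfile, max_eq_right (by linarith [h.2]), min_eq_right (by linarith [h.1])]

theorem melasProfile_of_ge (h : a + 1 ≤ s) : melasProfile a s = 0 := by
  rw [melasProfile, max_eq_left (by linarith), min_eq_right zero_le_one]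

theorem melasProfile_eq_zero_of_mem_sdiff (hs : s ∈ Ioi 0 \ Ioc 0 (a + 1)) :
    melasProfile a s = 0 :=
  melasProfile_of_ge (not_lt.1 fun h => hs.2 ⟨hs.1, h.le⟩)

@[fun_prop]
theorem continuous_melasProfile (a : ℝ) : Continuous (melasProfile a) := by
  unfold melasProfile
  fun_prop

theorem integrableOn_pow_mul_melasProfile (a : ℝ) (j : ℕ) :
    IntegrableOn (fun s => s ^ j * melasProfile a s) (Ioi 0) := by
  refine (Continuous.integrableOn_Ioc (a := 0) (b := a + 1) (by fun_prop)).of_forall_sdiff_eq_zero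
    measurableSet_Ioi fun s hs => ?_
  rw [melasProfile_eq_zero_of_mem_sdiff hs, mul_zero]

theorem integral_pow_mul_melasProfile (ha : 0 ≤ a) (j : ℕ) :
    ∫ s in Ioi 0, s ^ j * melasProfile a s
      = ((a + 1) ^ (j + 2) - a ^ (j + 2)) / (((j : ℝ) + 1) * ((j : ℝ) + 2)) := by
  have hcont : Continuous fun s => s ^ j * melasProfile a s := by fun_prop
  have hvanish : ∀ s ∈ Ioi 0 \ Ioc 0 (a + 1), s ^ j * melasProfile a s = 0 := fun s hs => by
    rw [melasProfile_eq_zero_of_mem_sdiff hs, mul_zero]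
  have hflat : ∫ s in (0)..a, s ^ j * melasProfile a s = ∫ s in (0)..a, s ^ j :=
    intervalIntegral.integral_congr fun s hs => by
      rw [uIcc_of_le ha] at hs
      rw [melasProfile_of_le hs.2, mul_one]
  have hramp : ∫ s in a..a + 1, s ^ j * melasProfile a s
      = ∫ s in a..a + 1, ((a + 1) * s ^ j - s ^ (j + 1)) :=
    intervalIntegral.integral_congr fun s hs => by
      rw [uIcc_of_le (by linarith)] at hs
      rw [melasProfile_of_mem_Icc hs]
      ring
  rw [setIntegral_eq_of_subset_of_forall_sdiff_eq_zero measurableSet_Ioi Ioc_subset_Ioi_self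
      hvanish,
    ← intervalIntegral.integral_of_le (by linarith),
    ← intervalIntegral.integral_add_adjacent_intervals (b := a) (hcont.intervalIntegrable _ _)
      (hcont.intervalIntegrable _ _), hflat, hramp,
    intervalIntegral.integral_sub (Continuous.intervalIntegrable (by fun_prop) _ _)
      (Continuous.intervalIntegrable (by fun_prop) _ _), intervalIntegral.integral_const_mul,
    integral_pow, integral_pow, integral_pow]
  field_simp
  push_cast
  ring

theorem integral_pow_pred_mul_melasProfile (ha : 0 ≤ a) {m : ℕ} (hm : 1 ≤ m) :
    ∫ s in Ioi 0, s ^ (m - 1) * melasProfile a s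
      = ((a + 1) ^ (m + 1) - a ^ (m + 1)) / ((m : ℝ) * ((m : ℝ) + 1)) := by
  obtain ⟨j, rfl⟩ : ∃ j, m = j + 1 := ⟨m - 1, by omega⟩
  rw [Nat.add_sub_cancel, integral_pow_mul_melasProfile ha]
  push_cast
  ring

end melasProfile

theorem monotoneOn_add_id_of_integral_deriv {ψ : ℝ → ℝ}
    (hψ_ftc : ∀ t, 0 ≤ t → ψ t = ψ 0 + ∫ s in (0)..t, deriv ψ s)
    (hψ_deriv : ∀ᵐ s ∂volume, 0 ≤ s → -1 ≤ deriv ψ s ∧ deriv ψ s ≤ 0) :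
    MonotoneOn (fun s => ψ s + s) (Ici 0) := by
  have hint : ∀ u t : ℝ, 0 ≤ u → 0 ≤ t → IntervalIntegrable (deriv ψ) volume u t :=
    fun u t hu ht =>
    (intervalIntegrable_const (c := (1 : ℝ))).mono_fun' (measurable_deriv ψ).aestronglyMeasurable
      ((ae_restrict_iff' measurableSet_uIoc).2 <| by
        filter_upwards [hψ_deriv] with s hs hsI
        have := hs ((le_min hu ht).trans hsI.1.le)
        rw [Real.norm_eq_abs, abs_le]
        exact ⟨this.1, this.2.trans zero_le_one⟩)
  intro u hu t ht hut
  have hdiff : ψ t - ψ u = ∫ s in u..t, deriv ψ s := by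
    rw [hψ_ftc t ht, hψ_ftc u hu,
      ← intervalIntegral.integral_interval_sub_left (hint 0 t le_rfl ht) (hint 0 u le_rfl hu)]
    ring
  have hlower : ∫ s in u..t, (-1 : ℝ) ≤ ∫ s in u..t, deriv ψ s :=
    intervalIntegral.integral_mono_ae_restrict hut intervalIntegrable_const (hint u t hu ht) <|
      (ae_restrict_iff' measurableSet_Icc).2 <| by
        filter_upwards [hψ_deriv] with s hs hsI
        exact (hs (hu.out.trans hsI.1)).1
  simp only [intervalIntegral.integral_const, smul_eq_mul] at hlower
  linarith

theorem exists_crossing_melasProfile {ψ : ℝ → ℝ} {a : ℝ} (ha : 0 ≤ a)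
    (hψ_nonneg : ∀ s, 0 ≤ s → 0 ≤ ψ s) (hψ_le_one : ∀ s, 0 ≤ s → ψ s ≤ 1)
    (hmono : MonotoneOn (fun s => ψ s + s) (Ici 0)) :
    ∃ c, 0 ≤ c ∧ ∀ s, 0 ≤ s →
      (s < c → ψ s ≤ melasProfile a s) ∧ (c < s → melasProfile a s ≤ ψ s) := by
  set S := {s | 0 ≤ s ∧ ψ s + s ≤ a + 1}
  have h0S : (0 : ℝ) ∈ S := ⟨le_rfl, by linarith [hψ_le_one 0 le_rfl]⟩
  have hbdd : BddAbove S := ⟨a + 1, fun s hs => by linarith [hψ_nonneg s hs.1, hs.2]⟩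
  refine ⟨sSup S, le_csSup hbdd h0S, fun s hs => ⟨fun hlt => ?_, fun hgt => ?_⟩⟩
  · obtain ⟨t, htS, hst⟩ := exists_lt_of_lt_csSup ⟨0, h0S⟩ hlt
    have : ψ s + s ≤ a + 1 := (hmono hs htS.1 hst.le).trans htS.2
    exact le_min (hψ_le_one s hs) (le_max_of_le_right (by linarith))
  · have : a + 1 < ψ s + s := by
      by_contra! h
      exact (le_csSup hbdd ⟨hs, h⟩).not_gt hgt
    exact (min_le_right _ _).trans (max_le (hψ_nonneg s hs) (by linarith))

theorem sub_mul_sub_nonneg_of_crossing {f g h : ℝ → ℝ} {c s : ℝ} (hh : MonotoneOn h (Ici 0))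
    (hc : 0 ≤ c) (hs : 0 ≤ s) (hlt : s < c → f s ≤ g s) (hgt : c < s → g s ≤ f s) :
    0 ≤ (h s - h c) * (f s - g s) := by
  rcases lt_trichotomy s c with hsc | rfl | hcs
  · exact mul_nonneg_of_nonpos_of_nonpos (sub_nonpos.2 (hh hs hc hsc.le)) (sub_nonpos.2 (hlt hsc))
  · simp
  · exact mul_nonneg (sub_nonneg.2 (hh hc hs hcs.le)) (sub_nonneg.2 (hgt hcs))

theorem integral_mul_le_integral_mul_of_sign {α : Type*} [MeasurableSpace α] {μ : Measure α}
    {f g k : α → ℝ} (k₀ : ℝ) (hf : Integrable f μ) (hg : Integrable g μ)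
    (hkf : Integrable (fun x => k x * f x) μ) (hkg : Integrable (fun x => k x * g x) μ)
    (hsign : ∀ᵐ x ∂μ, 0 ≤ (k x - k₀) * (f x - g x)) (heq : ∫ x, f x ∂μ = ∫ x, g x ∂μ) :
    ∫ x, k x * g x ∂μ ≤ ∫ x, k x * f x ∂μ := by
  have key : 0 ≤ ∫ x, (k x - k₀) * (f x - g x) ∂μ := integral_nonneg_of_ae hsign
  have hexpand : (fun x => (k x - k₀) * (f x - g x))
      = fun x => (k x * f x - k x * g x) - k₀ * (f x - g x) := by
    ext x
    ring
  have hkfg : Integrable (fun x => k x * f x - k x * g x) μ := hkf.sub hkg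
  have hfg : Integrable (fun x => k₀ * (f x - g x)) μ := (hf.sub hg).const_mul k₀
  rw [hexpand, integral_sub hkfg hfg, integral_sub hkf hkg, integral_const_mul,
    integral_sub hf hg, heq] at key
  linarith

theorem integral_pow_mul_melasProfile_le {ψ : ℝ → ℝ} {a : ℝ} (ha : 0 ≤ a)
    (hψ_nonneg : ∀ s, 0 ≤ s → 0 ≤ ψ s) (hψ_le_one : ∀ s, 0 ≤ s → ψ s ≤ 1)
    (hmono : MonotoneOn (fun s => ψ s + s) (Ici 0)) {k m : ℕ}
    (hm : IntegrableOn (fun s => s ^ m * ψ s) (Ioi 0))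
    (hkm : IntegrableOn (fun s => s ^ (k + m) * ψ s) (Ioi 0))
    (heq : ∫ s in Ioi 0, s ^ m * ψ s = ∫ s in Ioi 0, s ^ m * melasProfile a s) :
    ∫ s in Ioi 0, s ^ (k + m) * melasProfile a s ≤ ∫ s in Ioi 0, s ^ (k + m) * ψ s := by
  obtain ⟨c, hc, hcross⟩ := exists_crossing_melasProfile ha hψ_nonneg hψ_le_one hmono
  simp only [pow_add, mul_assoc] at hkm ⊢
  refine integral_mul_le_integral_mul_of_sign (c ^ k) hm (integrableOn_pow_mul_melasProfile a m)
    hkm (by simpa only [pow_add, mul_assoc, IntegrableOn] using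
      integrableOn_pow_mul_melasProfile a (k + m))
    ((ae_restrict_iff' measurableSet_Ioi).2 (Filter.Eventually.of_forall fun s hs => ?_)) heq
  have hs₀ : 0 ≤ s := le_of_lt hs
  rw [← mul_sub, mul_left_comm]
  exact mul_nonneg (pow_nonneg hs₀ _) <| sub_mul_sub_nonneg_of_crossing (h := (· ^ k))
    (fun x hx y _ hxy => pow_le_pow_left₀ hx hxy _) hc hs₀ (hcross s hs₀).1 (hcross s hs₀).2

theorem stmt13_general (n l : ℕ) (hn : 2 ≤ n) (ψ : ℝ → ℝ)
    (hψ_nonneg : ∀ s, 0 ≤ s → 0 ≤ ψ s)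
    (hψ_anti : AntitoneOn ψ (Set.Ici 0))
    (hψ0 : ψ 0 = 1)
    (hψ_ftc : ∀ t, 0 ≤ t → ψ t = ψ 0 + ∫ s in (0:ℝ)..t, deriv ψ s)
    (hψ_deriv : ∀ᵐ s ∂volume, 0 ≤ s → -1 ≤ deriv ψ s ∧ deriv ψ s ≤ 0)
    (A B : ℝ)
    (hA : A = ∫ s in Set.Ioi (0:ℝ), s ^ (n - 1) * ψ s)
    (hAint : IntegrableOn (fun s => s ^ (n - 1) * ψ s) (Set.Ioi 0))
    (hB : B = ∫ s in Set.Ioi (0:ℝ), s ^ (2 * l + n - 1) * ψ s)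
    (hBint : IntegrableOn (fun s => s ^ (2 * l + n - 1) * ψ s) (Set.Ioi 0))
    (a : ℝ) (ha : 0 ≤ a)
    (haA : ((a + 1) ^ (n + 1) - a ^ (n + 1)) / ((n : ℝ) + 1) = (n : ℝ) * A) :
    B ≥ (1 / (n : ℝ)) * ((n : ℝ) * A) ^ ((2 * (l : ℝ) + (n : ℝ)) / (n : ℝ))
        + ((a + 1) ^ (n + 2 * l + 1) - a ^ (n + 2 * l + 1))
            / ((2 * (l : ℝ) + (n : ℝ)) * ((n : ℝ) + 2 * (l : ℝ) + 1))
        - ((n : ℝ) * A) ^ (2 * (l : ℝ) / (n : ℝ)) * ((a + 1) ^ (n + 1) - a ^ (n + 1))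
            / ((n : ℝ) * ((n : ℝ) + 1)) := by
  have hn₀ : (n : ℝ) ≠ 0 := by positivity
  have hψ_le_one : ∀ s, 0 ≤ s → ψ s ≤ 1 := fun s hs => hψ0 ▸ hψ_anti self_mem_Ici hs hs
  have hS : (a + 1) ^ (n + 1) - a ^ (n + 1) = ((n : ℝ) + 1) * ((n : ℝ) * A) := by
    rw [← haA]
    field_simp
  have hnA : 0 < (n : ℝ) * A := by
    rw [← haA]
    exact div_pos (sub_pos.2 (pow_lt_pow_left₀ (by linarith) ha (by omega))) (by positivity)
  have hprofileA : A = ∫ s in Ioi 0, s ^ (n - 1) * melasProfile a s := by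
    rw [integral_pow_pred_mul_melasProfile ha (by omega), hS]
    field_simp
  have hB_ge : ∫ s in Ioi 0, s ^ (2 * l + n - 1) * melasProfile a s ≤ B := by
    rw [hB]
    rw [show 2 * l + n - 1 = 2 * l + (n - 1) by omega] at hBint ⊢
    exact integral_pow_mul_melasProfile_le ha hψ_nonneg hψ_le_one
      (monotoneOn_add_id_of_integral_deriv hψ_ftc hψ_deriv) hAint hBint (hA.symm.trans hprofileA)
  have hcancel : 1 / (n : ℝ) * ((n : ℝ) * A) ^ ((2 * (l : ℝ) + (n : ℝ)) / (n : ℝ))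
      = ((n : ℝ) * A) ^ (2 * (l : ℝ) / (n : ℝ)) * ((a + 1) ^ (n + 1) - a ^ (n + 1))
          / ((n : ℝ) * ((n : ℝ) + 1)) := by
    rw [hS, add_div, div_self hn₀, Real.rpow_add hnA, Real.rpow_one]
    field_simp
  have hprofileB : ∫ s in Ioi 0, s ^ (2 * l + n - 1) * melasProfile a s
      = ((a + 1) ^ (n + 2 * l + 1) - a ^ (n + 2 * l + 1))
          / ((2 * (l : ℝ) + (n : ℝ)) * ((n : ℝ) + 2 * (l : ℝ) + 1)) := by
    rw [integral_pow_pred_mul_melasProfile ha (by omega)]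
    push_cast
    ring
  rw [ge_iff_le, hcancel, add_sub_cancel_left, ← hprofileB]
  exact hB_ge

/-- Lemma (Melas-type) for the poly-Laplacian: lower bound for the higher moment `B` of a
decreasing, absolutely continuous function `ψ` on `[0,∞)` with `ψ(0) = 1` and
`-1 ≤ ψ' ≤ 0` almost everywhere.  Absolute continuity is encoded via the fundamental
theorem of calculus: `ψ t = ψ 0 + ∫_0^t ψ'`. -/
theorem stmt13 (n l : ℕ) (hn : 2 ≤ n) (hl : 2 ≤ l) (ψ : ℝ → ℝ)
    (hψ_nonneg : ∀ s, 0 ≤ s → 0 ≤ ψ s)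
    (hψ_anti : AntitoneOn ψ (Set.Ici 0))
    (hψ0 : ψ 0 = 1)
    (hψ_ftc : ∀ t, 0 ≤ t → ψ t = ψ 0 + ∫ s in (0:ℝ)..t, deriv ψ s)
    (hψ_deriv : ∀ᵐ s ∂volume, 0 ≤ s → -1 ≤ deriv ψ s ∧ deriv ψ s ≤ 0)
    (A B : ℝ)
    (hA : A = ∫ s in Set.Ioi (0:ℝ), s ^ (n - 1) * ψ s)
    (hAint : IntegrableOn (fun s => s ^ (n - 1) * ψ s) (Set.Ioi 0))
    (hB : B = ∫ s in Set.Ioi (0:ℝ), s ^ (2 * l + n - 1) * ψ s)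
    (hBint : IntegrableOn (fun s => s ^ (2 * l + n - 1) * ψ s) (Set.Ioi 0))
    (a : ℝ) (ha : 0 ≤ a)
    (haA : ((a + 1) ^ (n + 1) - a ^ (n + 1)) / ((n : ℝ) + 1) = (n : ℝ) * A) :
    B ≥ (1 / (n : ℝ)) * ((n : ℝ) * A) ^ ((2 * (l : ℝ) + (n : ℝ)) / (n : ℝ))
        + ((a + 1) ^ (n + 2 * l + 1) - a ^ (n + 2 * l + 1))
            / ((2 * (l : ℝ) + (n : ℝ)) * ((n : ℝ) + 2 * (l : ℝ) + 1))
        - ((n : ℝ) * A) ^ (2 * (l : ℝ) / (n : ℝ)) * ((a + 1) ^ (n + 1) - a ^ (n + 1))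
            / ((n : ℝ) * ((n : ℝ) + 1)) :=
  stmt13_general n l hn ψ hψ_nonneg hψ_anti hψ0 hψ_ftc hψ_deriv A B hA hAint hB hBint a ha haA
end

section
/- Let n ≥ 2 and l ≥ 2 be integers, a ≥ 0 a real number, and τ a real number with 0 < τ < a + 1. Define H(s) = 2l·τ^{n+2l−2} + 4l·τ^{n+2l−3}·s + n(2l−1)·τ^{2l−2}·s^n + n(2l−2)·τ^{2l−3}·s^{n+1} + n(2l−3)·τ^{2l−4}·s^{n+2} and Q(x) = 2l + 4l·x + n(2l−1)·x^n + n(2l−2)·x^{n+1} + n(2l−3)·x^{n+2}. Then ∫_a^{a+1} (s−τ)²·H(s) ds ≥ (1/12)·Q(1/5)·τ^{n+2l−2}. -/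
/-!
Dropping the terms of `H` with a factor `sⁿ` leaves `2 l τ^(n+2l-3) (τ + 2s)`, and on an interval
`[a, a+1] ⊆ [0, ∞)` containing `τ` in its closure the integral of `(s - τ)² (τ + 2s)` is at least
`τ / 8`. The claim then reduces to `Q(1/5) ≤ 3 l`, which holds because `n 5⁻ⁿ ≤ 2/25` for `n ≥ 2`.
-/

/-- The function `H(s)` from the proof of Corollary 3.2. -/
def H (n l : ℕ) (τ s : ℝ) : ℝ :=
  2 * (l : ℝ) * τ ^ (n + 2 * l - 2) + 4 * (l : ℝ) * τ ^ (n + 2 * l - 3) * s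
    + (n : ℝ) * (2 * (l : ℝ) - 1) * τ ^ (2 * l - 2) * s ^ n
    + (n : ℝ) * (2 * (l : ℝ) - 2) * τ ^ (2 * l - 3) * s ^ (n + 1)
    + (n : ℝ) * (2 * (l : ℝ) - 3) * τ ^ (2 * l - 4) * s ^ (n + 2)

/-- The polynomial `Q(x)` from the proof of Corollary 3.2. -/
def Q (n l : ℕ) (x : ℝ) : ℝ :=
  2 * (l : ℝ) + 4 * (l : ℝ) * x + (n : ℝ) * (2 * (l : ℝ) - 1) * x ^ n
    + (n : ℝ) * (2 * (l : ℝ) - 2) * x ^ (n + 1)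
    + (n : ℝ) * (2 * (l : ℝ) - 3) * x ^ (n + 2)

lemma mul_add_two_mul_le_H (n : ℕ) {l : ℕ} (hl : 2 ≤ l) {τ s : ℝ} (hτ : 0 ≤ τ) (hs : 0 ≤ s) :
    2 * l * τ ^ (n + 2 * l - 3) * (τ + 2 * s) ≤ H n l τ s := by
  have hl' : (2 : ℝ) ≤ l := by exact_mod_cast hl
  have hpow : τ ^ (n + 2 * l - 2) = τ ^ (n + 2 * l - 3) * τ := by
    rw [← pow_succ]; congr 1; omega
  have h₁ : 0 ≤ (n : ℝ) * (2 * l - 1) * τ ^ (2 * l - 2) * s ^ n := by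
    have : (0 : ℝ) ≤ 2 * l - 1 := by linarith
    positivity
  have h₂ : 0 ≤ (n : ℝ) * (2 * l - 2) * τ ^ (2 * l - 3) * s ^ (n + 1) := by
    have : (0 : ℝ) ≤ 2 * l - 2 := by linarith
    positivity
  have h₃ : 0 ≤ (n : ℝ) * (2 * l - 3) * τ ^ (2 * l - 4) * s ^ (n + 2) := by
    have : (0 : ℝ) ≤ 2 * l - 3 := by linarith
    positivity
  rw [H, hpow]
  linarith

lemma integral_sq_sub_mul_add_two_mul (a b τ : ℝ) :
    ∫ s in a..b, (s - τ) ^ 2 * (τ + 2 * s) =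
      ((b - τ) ^ 3 * (τ + 2 * b) / 3 - (b - τ) ^ 4 / 6)
        - ((a - τ) ^ 3 * (τ + 2 * a) / 3 - (a - τ) ^ 4 / 6) := by
  refine intervalIntegral.integral_eq_sub_of_hasDerivAt
    (f := fun s => (s - τ) ^ 3 * (τ + 2 * s) / 3 - (s - τ) ^ 4 / 6) (fun s _ => ?_)
    ((by fun_prop : Continuous fun s : ℝ => (s - τ) ^ 2 * (τ + 2 * s)).intervalIntegrable _ _)
  convert ((((hasDerivAt_id s).sub_const τ).pow 3).mul
    (((hasDerivAt_id s).const_mul 2).const_add τ)).div_const 3 |>.sub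
    ((((hasDerivAt_id s).sub_const τ).pow 4).div_const 6) using 1
  · rfl
  · simp only [id, Pi.pow_apply]; ring

/- Writing `a = m - 1/2` and `τ = m + t`, the integral minus `τ / 8` is
`m / 8 + 3 m t² + t³ - 3 t / 8`, which is positive for `m ≥ 1/2` and `-m ≤ t ≤ 1/2`. -/
lemma div_eight_le_integral_sq_sub_mul_add_two_mul {a τ : ℝ} (ha : 0 ≤ a) (hτ : 0 ≤ τ)
    (hτa : τ ≤ a + 1) :
    τ / 8 ≤ ∫ s in a..(a + 1), (s - τ) ^ 2 * (τ + 2 * s) := by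
  rw [integral_sq_sub_mul_add_two_mul]
  nlinarith [mul_nonneg (sq_nonneg (2 * τ - 2 * a - 1)) hτ,
    mul_nonneg (sq_nonneg (2 * τ - 2 * a - 1)) ha, sq_nonneg (8 * τ - 8 * a - 5),
    mul_nonneg ha hτ, mul_nonneg (sub_nonneg.2 hτa) hτ]

lemma natCast_mul_one_fifth_pow_le {n : ℕ} (hn : 2 ≤ n) : (n : ℝ) * (1 / 5) ^ n ≤ 2 / 25 := by
  have h : 25 * n ≤ 2 * 5 ^ n := by
    induction n, hn using Nat.le_induction with
    | base => norm_num
    | succ m hm ih => rw [pow_succ]; omega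
  rw [one_div_pow, mul_one_div, div_le_div_iff₀ (by positivity) (by norm_num)]
  exact_mod_cast (by omega : n * 25 ≤ 2 * 5 ^ n)

/- `Q n l (1/5)` is affine in `l` with slope `14/5 + (62/25) n 5⁻ⁿ ≤ 1874/625` and negative
constant term. -/
lemma Q_one_fifth_le {n : ℕ} (hn : 2 ≤ n) (l : ℕ) : Q n l (1 / 5) ≤ 3 * l := by
  have hp := natCast_mul_one_fifth_pow_le hn
  have hp0 : (0 : ℝ) ≤ n * (1 / 5) ^ n := by positivity
  have hl : (0 : ℝ) ≤ l := l.cast_nonneg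
  rw [Q, pow_succ, pow_succ, pow_succ]
  nlinarith

theorem stmt16 (n l : ℕ) (hn : 2 ≤ n) (hl : 2 ≤ l) (a : ℝ) (ha : 0 ≤ a) (τ : ℝ)
    (hτ : 0 < τ) (hτa : τ < a + 1) :
    (∫ s in a..(a + 1), (s - τ) ^ 2 * H n l τ s)
      ≥ (1 / 12) * Q n l (1 / 5) * τ ^ (n + 2 * l - 2) := by
  set c : ℝ := 2 * l * τ ^ (n + 2 * l - 3)
  have hpow : τ ^ (n + 2 * l - 2) = τ ^ (n + 2 * l - 3) * τ := by
    rw [← pow_succ]; congr 1; omega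
  calc (1 / 12) * Q n l (1 / 5) * τ ^ (n + 2 * l - 2)
      ≤ (1 / 12) * (3 * l) * τ ^ (n + 2 * l - 2) := by
        gcongr; exact Q_one_fifth_le hn l
    _ = c * (τ / 8) := by rw [hpow]; ring
    _ ≤ c * ∫ s in a..(a + 1), (s - τ) ^ 2 * (τ + 2 * s) := by
        gcongr; exact div_eight_le_integral_sq_sub_mul_add_two_mul ha hτ.le hτa.le
    _ = ∫ s in a..(a + 1), (s - τ) ^ 2 * (c * (τ + 2 * s)) := by
        rw [← intervalIntegral.integral_const_mul]; simp_rw [mul_left_comm c]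
    _ ≤ ∫ s in a..(a + 1), (s - τ) ^ 2 * H n l τ s :=
        intervalIntegral.integral_mono_on (by linarith)
          ((by fun_prop : Continuous _).intervalIntegrable _ _)
          ((by simp only [H]; fun_prop : Continuous _).intervalIntegrable _ _) fun s hs =>
          mul_le_mul_of_nonneg_left (mul_add_two_mul_le_H n hl hτ.le (ha.trans hs.1)) (sq_nonneg _)
end

section
/- Let n ≥ 1 be an integer and let Ω ⊆ ℝ^n be a bounded measurable set with Lebesgue measure V = vol(Ω) > 0. Then for every point p ∈ ℝ^n, ∫_Ω |x − p|² dx ≥ (n/(n+2))·V·(V/ω_n)^{2/n}, where ω_n is the volume of the unit ball in ℝ^n. In particular the moment of inertia I(Ω) = min_{p ∈ ℝ^n} ∫_Ω |x − p|² dx satisfies the same lower bound. -/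
/-!
Bathtub principle: if `f ≤ c` on `s` and `f ≥ c` off `s`, then `s` minimises `∫ f` among
sets of the same measure, since trading `s \ t` for the equally large `t \ s` moves mass from
where `f ≤ c` to where `f ≥ c`. For `f x = ‖x - p‖²` and `s` the closed ball about `p` of volume
`vol Ω`, i.e. of radius `r = (vol Ω / ω_n)^(1/n)`, polar coordinates give
`∫_s ‖x - p‖² = n/(n+2) · vol Ω · r²`.
-/

open MeasureTheory Metric Set Module

theorem setIntegral_le_setIntegral_of_measure_eq {α : Type*} [MeasurableSpace α]
    {μ : Measure α} {f : α → ℝ} {s t : Set α} (c : ℝ) (hs : MeasurableSet s)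
    (ht : MeasurableSet t) (hst : μ s = μ t) (hs_fin : μ s ≠ ⊤)
    (hfs : IntegrableOn f s μ) (hft : IntegrableOn f t μ)
    (hle : ∀ x ∈ s \ t, f x ≤ c) (hge : ∀ x ∈ t \ s, c ≤ f x) :
    ∫ x in s, f x ∂μ ≤ ∫ x in t, f x ∂μ := by
  have hsdiff_fin : μ (s \ t) ≠ ⊤ := measure_ne_top_of_subset sdiff_subset hs_fin
  have hsdiff : μ (s \ t) = μ (t \ s) := measure_sdiff_symm hs.nullMeasurableSet
    ht.nullMeasurableSet hst (measure_ne_top_of_subset inter_subset_left hs_fin)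
  calc ∫ x in s, f x ∂μ = ∫ x in s ∩ t, f x ∂μ + ∫ x in s \ t, f x ∂μ :=
        (integral_inter_add_sdiff ht hfs).symm
    _ ≤ ∫ x in s ∩ t, f x ∂μ + c * μ.real (s \ t) := by
        grw [setIntegral_mono_on (hfs.mono_set sdiff_subset) (integrableOn_const hsdiff_fin)
          (hs.diff ht) hle, setIntegral_const, smul_eq_mul, mul_comm]
    _ ≤ ∫ x in t ∩ s, f x ∂μ + ∫ x in t \ s, f x ∂μ := by
        rw [inter_comm, measureReal_def, hsdiff, ← measureReal_def]
        grw [setIntegral_ge_of_const_le_real (ht.diff hs) (hsdiff ▸ hsdiff_fin) hge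
          (hft.mono_set sdiff_subset)]
    _ = ∫ x in t, f x ∂μ := integral_inter_add_sdiff hs hft

section

variable {E : Type*} [NormedAddCommGroup E] [NormedSpace ℝ E] [FiniteDimensional ℝ E]
  [MeasurableSpace E] [BorelSpace E] (μ : Measure E) [μ.IsAddHaarMeasure]

theorem integral_closedBall_zero_norm_pow [Nontrivial E] (k : ℕ) {r : ℝ} (hr : 0 ≤ r) :
    ∫ x in closedBall (0 : E) r, ‖x‖ ^ k ∂μ
      = finrank ℝ E / (finrank ℝ E + k) * μ.real (closedBall (0 : E) r) * r ^ k := by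
  have hradial : ∫ y in Ioi (0 : ℝ), y ^ (finrank ℝ E - 1) • (Iic r).indicator (· ^ k) y
      = r ^ (finrank ℝ E + k) / (finrank ℝ E + k) := by
    obtain ⟨m, hm⟩ : ∃ m, finrank ℝ E = m + 1 :=
      Nat.exists_eq_add_one_of_ne_zero finrank_pos.ne'
    have hintegrand : (fun y : ℝ => y ^ (finrank ℝ E - 1) • (Iic r).indicator (· ^ k) y)
        = (Iic r).indicator (· ^ (finrank ℝ E - 1 + k)) := by
      ext y
      simp [indicator_apply, pow_add]
    rw [hintegrand, integral_indicator measurableSet_Iic,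
      Measure.restrict_restrict measurableSet_Iic, Iic_inter_Ioi,
      ← intervalIntegral.integral_of_le hr, integral_pow, hm,
      zero_pow (by omega), sub_zero, Nat.add_sub_cancel]
    push_cast
    ring
  calc ∫ x in closedBall (0 : E) r, ‖x‖ ^ k ∂μ
      = ∫ x, (Iic r).indicator (· ^ k) ‖x‖ ∂μ := by
        rw [← integral_indicator measurableSet_closedBall]
        congr 1 with x
        classical
        simp [indicator_apply]
    _ = _ := by
        rw [integral_fun_norm_addHaar μ, hradial, Measure.addHaar_real_closedBall μ 0 hr,
          nsmul_eq_mul, smul_eq_mul]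
        field_simp
        ring

theorem integral_closedBall_norm_sub_pow [Nontrivial E] (p : E) (k : ℕ) {r : ℝ} (hr : 0 ≤ r) :
    ∫ x in closedBall p r, ‖x - p‖ ^ k ∂μ
      = finrank ℝ E / (finrank ℝ E + k) * μ.real (closedBall p r) * r ^ k := by
  have hpre : (· - p) ⁻¹' closedBall (0 : E) r = closedBall p r := by
    ext x
    simp [dist_eq_norm]
  rw [← hpre, (measurePreserving_sub_right μ p).setIntegral_preimage_emb
    (measurableEmbedding_subRight p) (‖·‖ ^ k), integral_closedBall_zero_norm_pow μ k hr, hpre,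
    Measure.addHaar_real_closedBall_center μ p r]

theorem addHaar_real_closedBall_rpow_inv_finrank [Nontrivial E] (p : E) {v : ℝ} (hv : 0 ≤ v) :
    μ.real (closedBall p ((v / μ.real (closedBall (0 : E) 1)) ^ (finrank ℝ E : ℝ)⁻¹)) = v := by
  have hunit : 0 < μ.real (closedBall (0 : E) 1) :=
    ENNReal.toReal_pos (measure_closedBall_pos μ 0 one_pos).ne' measure_closedBall_lt_top.ne
  rw [Measure.addHaar_real_closedBall' μ p (by positivity),
    Real.rpow_inv_natCast_pow (by positivity) finrank_pos.ne', div_mul_cancel₀ _ hunit.ne']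

end

theorem stmt17 (n : ℕ) (hn : 1 ≤ n) (Ω : Set (EuclideanSpace ℝ (Fin n)))
    (hmeas : MeasurableSet Ω) (hbdd : Bornology.IsBounded Ω)
    (hV : 0 < (volume Ω).toReal) (p : EuclideanSpace ℝ (Fin n)) :
    (∫ x in Ω, ‖x - p‖ ^ 2) ≥
      ((n : ℝ) / ((n : ℝ) + 2)) * (volume Ω).toReal *
        ((volume Ω).toReal /
            (volume (Metric.closedBall (0 : EuclideanSpace ℝ (Fin n)) 1)).toReal) ^
          ((2 : ℝ) / (n : ℝ)) := by
  have : Nonempty (Fin n) := ⟨⟨0, hn⟩⟩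
  have hΩ_fin : volume Ω ≠ ⊤ := (ENNReal.toReal_pos_iff.mp hV).2.ne
  set ρ := (volume Ω).toReal / (volume (closedBall (0 : EuclideanSpace ℝ (Fin n)) 1)).toReal
  set r := ρ ^ (n : ℝ)⁻¹
  have hr : 0 ≤ r := by positivity
  have hB : volume (closedBall p r) = volume Ω := by
    have := addHaar_real_closedBall_rpow_inv_finrank volume p hV.le
    rwa [finrank_euclideanSpace_fin, measureReal_def,
      ENNReal.toReal_eq_toReal_iff' measure_closedBall_lt_top.ne hΩ_fin] at this
  have hr_sq : r ^ 2 = ρ ^ ((2 : ℝ) / n) := by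
    rw [← Real.rpow_natCast, ← Real.rpow_mul (by positivity)]
    congr 1
    push_cast
    ring
  have hf : Continuous fun x : EuclideanSpace ℝ (Fin n) => ‖x - p‖ ^ 2 := by fun_prop
  obtain ⟨R, hΩR⟩ := hbdd.subset_closedBall p
  calc ∫ x in Ω, ‖x - p‖ ^ 2
      ≥ ∫ x in closedBall p r, ‖x - p‖ ^ 2 :=
        setIntegral_le_setIntegral_of_measure_eq (r ^ 2) measurableSet_closedBall hmeas hB
          (hB ▸ hΩ_fin) (hf.continuousOn.integrableOn_compact (isCompact_closedBall p r))
          ((hf.continuousOn.integrableOn_compact (isCompact_closedBall p R)).mono_set hΩR)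
          (fun x hx => by
            have := mem_closedBall_iff_norm.mp hx.1
            gcongr)
          (fun x hx => by
            have := not_le.mp (mt mem_closedBall_iff_norm.mpr hx.2)
            gcongr)
    _ = n / (n + 2) * (volume Ω).toReal * ρ ^ ((2 : ℝ) / n) := by
        rw [integral_closedBall_norm_sub_pow volume p 2 hr, finrank_euclideanSpace_fin,
          measureReal_def, hB, hr_sq]
        push_cast
        ring
end

section
/- Let Ω ⊆ ℝ^n be a bounded measurable set with vol(Ω) = V and I = ∫_Ω |x|² dx, and let u_1, …, u_k be an orthonormal family in L²(ℝ^n) with each u_j vanishing almost everywhere outside Ω. Define f_j(ξ) = (2π)^{−n/2} ∫_Ω u_j(x) e^{i x·ξ} dx and F(ξ) = Σ_{j=1}^{k} |f_j(ξ)|². Then F is differentiable and for every ξ ∈ ℝ^n, |∇F(ξ)| ≤ 2·(2π)^{−n}·√(V·I). -/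
/-!
Write `e_ξ(x) = exp(i ⟪x, ξ⟫)` and `c = (2π)^(-n/2)`, so `f_j(ξ) = c ∫_Ω u_j e_ξ`. Differentiating
under the integral sign (legitimate because `Ω` is bounded) gives
`∂_v f_j(ξ) = c ∫_Ω u_j (i ⟪x, v⟫ e_ξ)`, hence `∂_v F = 2 ∑ ⟪f_j, ∂_v f_j⟫_ℝ` and, by
Cauchy–Schwarz, `|∂_v F| ≤ 2 (∑ |f_j|²)^(1/2) (∑ |∂_v f_j|²)^(1/2)`. Both sums are Bessel sums of
the orthonormal family against the test functions `e_ξ` and `i ⟪x, v⟫ e_ξ` in `L²(Ω)`, so they are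
at most `c² ‖e_ξ‖² = c² V` and `c² ∫_Ω ⟪x, v⟫² ≤ c² I |v|²` respectively.
-/

open MeasureTheory Complex ComplexConjugate

section PlaneWave

variable {E : Type*} [NormedAddCommGroup E] [InnerProductSpace ℝ E]

noncomputable def planeWave (ξ x : E) : ℂ := cexp (I * inner ℝ x ξ)

theorem norm_planeWave (ξ x : E) : ‖planeWave ξ x‖ = 1 := by
  rw [planeWave, mul_comm]
  exact norm_exp_ofReal_mul_I _

@[fun_prop]
theorem continuous_planeWave (ξ : E) : Continuous (planeWave ξ) := by
  unfold planeWave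
  fun_prop

theorem hasFDerivAt_planeWave (x ξ : E) :
    HasFDerivAt (planeWave · x) ((planeWave ξ x * I) • ofRealCLM.comp (innerSL ℝ x)) ξ := by
  have h := ((ofRealCLM.hasFDerivAt.comp ξ (innerSL ℝ x).hasFDerivAt).const_mul I).cexp
  rw [← mul_smul] at h
  exact h

theorem norm_planeWave_fderiv_le (a : ℂ) (x ξ : E) :
    ‖(a * planeWave ξ x * I) • ofRealCLM.comp (innerSL ℝ x)‖ ≤ ‖a‖ * ‖x‖ := by
  refine ContinuousLinearMap.opNorm_le_bound _ (by positivity) fun v => ?_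
  rw [smul_apply, norm_smul, norm_mul, norm_mul, norm_planeWave, norm_I, mul_one, mul_one,
    mul_assoc]
  gcongr
  simpa using abs_real_inner_le_norm x v

end PlaneWave

theorem sum_norm_integral_mul_sq_le {α ι : Type*} [MeasurableSpace α] {μ : Measure α}
    [Fintype ι] [DecidableEq ι] {u : ι → α → ℂ} (hu : ∀ i, MemLp (u i) 2 μ)
    (horth : ∀ i j, ∫ x, u i x * conj (u j x) ∂μ = if i = j then 1 else 0)
    {g : α → ℂ} (hg : MemLp g 2 μ) :
    ∑ i, ‖∫ x, u i x * g x ∂μ‖ ^ 2 ≤ ∫ x, ‖g x‖ ^ 2 ∂μ := by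
  -- With the convention `⟪f, g⟫ = ∫ conj f * g`, it is the family `conj ∘ u i` that is orthonormal.
  let U i : Lp ℂ 2 μ := (hu i).star.toLp _
  have inner_U (i : ι) {w : Lp ℂ 2 μ} {w' : α → ℂ} (hw : w =ᵐ[μ] w') :
      inner ℂ (U i) w = ∫ x, u i x * w' x ∂μ := by
    rw [L2.inner_def]
    refine integral_congr_ae ?_
    filter_upwards [(hu i).star.coeFn_toLp, hw] with x hUx hwx
    simp [U, hUx, hwx, mul_comm]
  have hU : Orthonormal ℂ U := by
    rw [orthonormal_iff_ite]
    intro i j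
    rw [inner_U i (hu j).star.coeFn_toLp, ← horth i j]
    rfl
  have hnorm : ‖hg.toLp g‖ ^ 2 = ∫ x, ‖g x‖ ^ 2 ∂μ := by
    rw [@norm_sq_eq_re_inner ℂ, L2.inner_def, ← integral_re (L2.integrable_inner _ _)]
    refine integral_congr_ae ?_
    filter_upwards [hg.coeFn_toLp] with x hx
    simp only [hx, inner_self_eq_norm_sq]
  calc ∑ i, ‖∫ x, u i x * g x ∂μ‖ ^ 2 = ∑ i, ‖inner ℂ (U i) (hg.toLp g)‖ ^ 2 := by
        simp only [inner_U _ hg.coeFn_toLp]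
    _ ≤ ‖hg.toLp g‖ ^ 2 := hU.sum_inner_products_le _
    _ = ∫ x, ‖g x‖ ^ 2 ∂μ := hnorm

theorem norm_sum_two_smul_innerSL_comp_le {ι E F : Type*} [Fintype ι] [NormedAddCommGroup E]
    [NormedSpace ℝ E] [NormedAddCommGroup F] [InnerProductSpace ℝ F] (a : ι → F)
    (D : ι → E →L[ℝ] F) {A B : ℝ} (hA : ∑ i, ‖a i‖ ^ 2 ≤ A)
    (hB : ∀ v, ∑ i, ‖D i v‖ ^ 2 ≤ B * ‖v‖ ^ 2) :
    ‖∑ i, 2 • (innerSL ℝ (a i)).comp (D i)‖ ≤ 2 * √(A * B) := by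
  have hA₀ : 0 ≤ A := (Finset.sum_nonneg fun i _ => sq_nonneg _).trans hA
  refine ContinuousLinearMap.opNorm_le_bound _ (by positivity) fun v => ?_
  calc ‖(∑ i, 2 • (innerSL ℝ (a i)).comp (D i)) v‖
      = 2 * |∑ i, inner ℝ (a i) (D i v)| := by
        simp [← Finset.mul_sum]
    _ ≤ 2 * ∑ i, ‖a i‖ * ‖D i v‖ := by
        gcongr
        exact (Finset.abs_sum_le_sum_abs _ _).trans
          (Finset.sum_le_sum fun i _ => abs_real_inner_le_norm _ _)
    _ ≤ 2 * (√(∑ i, ‖a i‖ ^ 2) * √(∑ i, ‖D i v‖ ^ 2)) := by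
        gcongr
        exact Real.sum_mul_le_sqrt_mul_sqrt _ _ _
    _ ≤ 2 * (√A * √(B * ‖v‖ ^ 2)) := by
        gcongr
        exact hB v
    _ = 2 * √(A * B) * ‖v‖ := by
        rw [Real.sqrt_mul' _ (sq_nonneg _), Real.sqrt_sq (norm_nonneg _), Real.sqrt_mul hA₀]
        ring

section FourierDerivative

variable {E : Type*} [NormedAddCommGroup E] [InnerProductSpace ℝ E] [MeasurableSpace E]
  [OpensMeasurableSpace E] [SecondCountableTopology E] {μ : Measure E} {R : ℝ} {u : E → ℂ}

theorem integrable_planeWave_fderiv (hu : Integrable u μ) (hR : ∀ᵐ x ∂μ, ‖x‖ ≤ R) (ξ : E) :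
    Integrable (fun x => (u x * planeWave ξ x * I) • ofRealCLM.comp (innerSL ℝ x)) μ := by
  have hcont : Continuous fun x : E => ofRealCLM.comp (innerSL ℝ x) := by fun_prop
  refine (hu.norm.mul_const R).mono' ?_ ?_
  · exact ((hu.1.mul (continuous_planeWave ξ).aestronglyMeasurable).mul
      aestronglyMeasurable_const).smul hcont.aestronglyMeasurable
  · filter_upwards [hR] with x hx
    exact (norm_planeWave_fderiv_le _ x ξ).trans (by gcongr)

theorem hasFDerivAt_integral_mul_planeWave (hu : Integrable u μ) (hR : ∀ᵐ x ∂μ, ‖x‖ ≤ R)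
    (ξ : E) :
    HasFDerivAt (fun ξ => ∫ x, u x * planeWave ξ x ∂μ)
      (∫ x, (u x * planeWave ξ x * I) • ofRealCLM.comp (innerSL ℝ x) ∂μ) ξ := by
  have hmeas (ξ : E) : AEStronglyMeasurable (fun x => u x * planeWave ξ x) μ :=
    hu.1.mul (continuous_planeWave ξ).aestronglyMeasurable
  refine hasFDerivAt_integral_of_dominated_of_fderiv_le (bound := fun x => ‖u x‖ * R)
    (F' := fun ξ x => (u x * planeWave ξ x * I) • ofRealCLM.comp (innerSL ℝ x))
    Filter.univ_mem (.of_forall hmeas) ?_ (integrable_planeWave_fderiv hu hR ξ).1 ?_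
    (hu.norm.mul_const R) ?_
  · refine hu.mono (hmeas ξ) (.of_forall fun x => ?_)
    rw [norm_mul, norm_planeWave, mul_one]
  · filter_upwards [hR] with x hx ξ' _
    exact (norm_planeWave_fderiv_le _ x ξ').trans (by gcongr)
  · refine .of_forall fun x ξ' _ => ?_
    simpa only [smul_smul, mul_assoc] using (hasFDerivAt_planeWave x ξ').const_mul (u x)

theorem exists_hasFDerivAt_integral_mul_planeWave (hu : Integrable u μ)
    (hR : ∀ᵐ x ∂μ, ‖x‖ ≤ R) (ξ : E) :
    ∃ D : E →L[ℝ] ℂ, HasFDerivAt (fun ξ => ∫ x, u x * planeWave ξ x ∂μ) D ξ ∧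
      ∀ v, D v = ∫ x, u x * (planeWave ξ x * I * inner ℝ x v) ∂μ := by
  refine ⟨_, hasFDerivAt_integral_mul_planeWave hu hR ξ, fun v => ?_⟩
  rw [ContinuousLinearMap.integral_apply (integrable_planeWave_fderiv hu hR ξ)]
  simp [mul_assoc]

end FourierDerivative

section FourierBessel

variable {E ι : Type*} [NormedAddCommGroup E] [InnerProductSpace ℝ E] [MeasurableSpace E]
  [OpensMeasurableSpace E] {μ : Measure E} [IsFiniteMeasure μ] [Fintype ι] [DecidableEq ι]
  {u : ι → E → ℂ}

theorem sum_norm_integral_mul_planeWave_sq_le (hu : ∀ i, MemLp (u i) 2 μ)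
    (horth : ∀ i j, ∫ x, u i x * conj (u j x) ∂μ = if i = j then 1 else 0) (ξ : E) :
    ∑ i, ‖∫ x, u i x * planeWave ξ x ∂μ‖ ^ 2 ≤ μ.real Set.univ := by
  have hg : MemLp (planeWave ξ) 2 μ :=
    .of_bound (by fun_prop) 1 (.of_forall fun x => (norm_planeWave ξ x).le)
  refine (sum_norm_integral_mul_sq_le hu horth hg).trans_eq ?_
  simp [norm_planeWave]

theorem sum_norm_integral_mul_planeWave_inner_sq_le {R : ℝ} (hR : ∀ᵐ x ∂μ, ‖x‖ ≤ R)
    (hu : ∀ i, MemLp (u i) 2 μ)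
    (horth : ∀ i j, ∫ x, u i x * conj (u j x) ∂μ = if i = j then 1 else 0) (ξ v : E) :
    ∑ i, ‖∫ x, u i x * (planeWave ξ x * I * inner ℝ x v) ∂μ‖ ^ 2 ≤
      (∫ x, ‖x‖ ^ 2 ∂μ) * ‖v‖ ^ 2 := by
  have hg_le (x : E) : ‖planeWave ξ x * I * inner ℝ x v‖ ≤ ‖x‖ * ‖v‖ := by
    simpa [norm_planeWave] using abs_real_inner_le_norm x v
  have hg : MemLp (fun x => planeWave ξ x * I * inner ℝ x v) 2 μ := by
    refine .of_bound (by fun_prop) (R * ‖v‖) ?_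
    filter_upwards [hR] with x hx
    exact (hg_le x).trans (by gcongr)
  have hsq : Integrable (fun x : E => ‖x‖ ^ 2) μ := by
    refine .of_bound (by fun_prop) (R ^ 2) ?_
    filter_upwards [hR] with x hx
    simpa using pow_le_pow_left₀ (norm_nonneg x) hx 2
  calc _ ≤ ∫ x, ‖planeWave ξ x * I * inner ℝ x v‖ ^ 2 ∂μ :=
        sum_norm_integral_mul_sq_le hu horth hg
    _ ≤ ∫ x, ‖x‖ ^ 2 * ‖v‖ ^ 2 ∂μ := by
        refine integral_mono_of_nonneg (.of_forall fun x => by positivity) (hsq.mul_const _)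
          (.of_forall fun x => ?_)
        simpa [mul_pow] using pow_le_pow_left₀ (norm_nonneg _) (hg_le x) 2
    _ = (∫ x, ‖x‖ ^ 2 ∂μ) * ‖v‖ ^ 2 := integral_mul_const _ _

end FourierBessel

theorem exists_hasFDerivAt_sum_norm_sq_le {E ι : Type*} [NormedAddCommGroup E]
    [InnerProductSpace ℝ E] [MeasurableSpace E] [OpensMeasurableSpace E]
    [SecondCountableTopology E] {μ : Measure E} [IsFiniteMeasure μ] [Fintype ι] [DecidableEq ι]
    {u : ι → E → ℂ} {R : ℝ} (hR : ∀ᵐ x ∂μ, ‖x‖ ≤ R) (hu : ∀ i, MemLp (u i) 2 μ)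
    (horth : ∀ i j, ∫ x, u i x * conj (u j x) ∂μ = if i = j then 1 else 0) (c : ℝ) (ξ : E) :
    ∃ L : E →L[ℝ] ℝ,
      HasFDerivAt (fun ξ => ∑ i, ‖(c : ℂ) * ∫ x, u i x * planeWave ξ x ∂μ‖ ^ 2) L ξ ∧
        ‖L‖ ≤ 2 * c ^ 2 * √(μ.real Set.univ * ∫ x, ‖x‖ ^ 2 ∂μ) := by
  choose D hD hDv using fun i =>
    exists_hasFDerivAt_integral_mul_planeWave ((hu i).integrable one_le_two) hR ξ
  have hnorm (z : ℂ) : ‖(c : ℂ) * z‖ ^ 2 = c ^ 2 * ‖z‖ ^ 2 := by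
    rw [norm_mul, mul_pow, norm_real, Real.norm_eq_abs, sq_abs]
  refine ⟨_, HasFDerivAt.fun_sum fun i _ => ((hD i).const_mul (c : ℂ)).norm_sq, ?_⟩
  calc _ ≤ 2 * √((c ^ 2 * μ.real Set.univ) * (c ^ 2 * ∫ x, ‖x‖ ^ 2 ∂μ)) := by
        refine norm_sum_two_smul_innerSL_comp_le _ _ ?_ fun v => ?_
        · simp only [hnorm, ← Finset.mul_sum]
          gcongr
          exact sum_norm_integral_mul_planeWave_sq_le hu horth ξ
        · simp only [smul_apply, smul_eq_mul, hnorm, ← Finset.mul_sum, hDv]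
          rw [mul_assoc]
          gcongr
          exact sum_norm_integral_mul_planeWave_inner_sq_le hR hu horth ξ v
    _ = 2 * c ^ 2 * √(μ.real Set.univ * ∫ x, ‖x‖ ^ 2 ∂μ) := by
        rw [mul_mul_mul_comm, ← sq, Real.sqrt_mul (by positivity), Real.sqrt_sq (by positivity),
          mul_assoc]

theorem stmt19_general (n k : ℕ) (Ω : Set (EuclideanSpace ℝ (Fin n)))
    (hbdd : Bornology.IsBounded Ω)
    (u : Fin k → EuclideanSpace ℝ (Fin n) → ℂ)
    (hL2 : ∀ j, MemLp (u j) 2 volume)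
    (hsupp : ∀ j, ∀ᵐ x ∂volume, x ∉ Ω → u j x = 0)
    (horth : ∀ i j, (∫ x, u i x * (starRingEnd ℂ) (u j x)) = if i = j then 1 else 0)
    (f : Fin k → EuclideanSpace ℝ (Fin n) → ℂ)
    (hf : ∀ j ξ, f j ξ = (((2 * Real.pi) ^ (-(n : ℝ) / 2) : ℝ) : ℂ) *
        ∫ x in Ω, u j x * Complex.exp (Complex.I * ((inner ℝ x ξ : ℝ) : ℂ)))
    (F : EuclideanSpace ℝ (Fin n) → ℝ)
    (hF : ∀ ξ, F ξ = ∑ j, ‖f j ξ‖ ^ 2) :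
    Differentiable ℝ F ∧ ∀ ξ, ‖gradient F ξ‖ ≤
      2 * (2 * Real.pi) ^ (-(n : ℝ)) *
        Real.sqrt ((volume Ω).toReal * ∫ x in Ω, ‖x‖ ^ 2) := by
  have : IsFiniteMeasure (volume.restrict Ω) := isFiniteMeasure_restrict.mpr hbdd.measure_lt_top.ne
  obtain ⟨R, hR⟩ := hbdd.subset_closedBall 0
  have hRΩ : ∀ᵐ x ∂volume.restrict Ω, ‖x‖ ≤ R :=
    ae_restrict_of_ae_restrict_of_subset hR
      (ae_restrict_of_forall_mem measurableSet_closedBall fun x hx => by simpa using hx)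
  have horthΩ (i j : Fin k) : ∫ x in Ω, u i x * conj (u j x) = if i = j then 1 else 0 := by
    rw [← horth, setIntegral_eq_integral_of_ae_compl_eq_zero]
    filter_upwards [hsupp i] with x hx hxΩ
    rw [hx hxΩ, zero_mul]
  have hF_eq : F = fun ξ => ∑ j, ‖(((2 * Real.pi) ^ (-(n : ℝ) / 2) : ℝ) : ℂ) *
      ∫ x in Ω, u j x * planeWave ξ x‖ ^ 2 :=
    funext fun ξ => by simp only [hF, hf]; rfl
  have hc : ((2 * Real.pi) ^ (-(n : ℝ) / 2)) ^ 2 = (2 * Real.pi) ^ (-(n : ℝ)) := by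
    rw [← Real.rpow_natCast, ← Real.rpow_mul (by positivity)]
    norm_num
  subst hF_eq
  have key := exists_hasFDerivAt_sum_norm_sq_le hRΩ (fun j => (hL2 j).restrict Ω) horthΩ
    ((2 * Real.pi) ^ (-(n : ℝ) / 2))
  refine ⟨fun ξ => (key ξ).choose_spec.1.differentiableAt, fun ξ => ?_⟩
  obtain ⟨L, hL, hL_le⟩ := key ξ
  rwa [gradient, hL.fderiv, LinearIsometryEquiv.norm_map, ← hc, ← measureReal_def,
    ← measureReal_restrict_apply_univ]

theorem stmt19 (n k : ℕ) (Ω : Set (EuclideanSpace ℝ (Fin n)))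
    (hmeas : MeasurableSet Ω) (hbdd : Bornology.IsBounded Ω)
    (u : Fin k → EuclideanSpace ℝ (Fin n) → ℂ)
    (hL2 : ∀ j, MemLp (u j) 2 volume)
    (hsupp : ∀ j, ∀ᵐ x ∂volume, x ∉ Ω → u j x = 0)
    (horth : ∀ i j, (∫ x, u i x * (starRingEnd ℂ) (u j x)) = if i = j then 1 else 0)
    (f : Fin k → EuclideanSpace ℝ (Fin n) → ℂ)
    (hf : ∀ j ξ, f j ξ = (((2 * Real.pi) ^ (-(n : ℝ) / 2) : ℝ) : ℂ) *
        ∫ x in Ω, u j x * Complex.exp (Complex.I * ((inner ℝ x ξ : ℝ) : ℂ)))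
    (F : EuclideanSpace ℝ (Fin n) → ℝ)
    (hF : ∀ ξ, F ξ = ∑ j, ‖f j ξ‖ ^ 2) :
    Differentiable ℝ F ∧ ∀ ξ, ‖gradient F ξ‖ ≤
      2 * (2 * Real.pi) ^ (-(n : ℝ)) *
        Real.sqrt ((volume Ω).toReal * ∫ x in Ω, ‖x‖ ^ 2) :=
  stmt19_general n k Ω hbdd u hL2 hsupp horth f hf F hF
end
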